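/- arXiv:2503.12664 — 3 statements merged into one kernel-verified Lean document; each statement's English description precedes it below -/
import Mathlib

section
/- Every symmetric positive definite matrix Ψ with block-tri-diagonal-arrow sparsity (nonzero blocks only on the block diagonal, the first block sub/super-diagonal, and the last block row/column) admits a Cholesky factorization Ψ = LLᵀ in which the lower-triangular factor L has the same sparsity pattern: nonzero blocks only on the block diagonal, the first block sub-diagonal, and the last block row. -/
open Matrix

set_option maxHeartbeats 1000000 in
/-- A symmetric positive definite matrix with block-tri-diagonal-arrow
sparsity admits a Cholesky factorization `Ψ = LLᵀ` whose lower-triangular factor `L`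
(with positive diagonal) has nonzero blocks only on the block diagonal, the first block
sub-diagonal, and the last block row.  The block partition of `Fin n` into `N+2`
contiguous blocks is encoded by a monotone labelling `blk`. -/
theorem block_tridiag_arrow_cholesky
    {n N : ℕ} (blk : Fin n → Fin (N + 2)) (hblk : Monotone blk)
    (Ψ : Matrix (Fin n) (Fin n) ℝ) (hsymm : Ψ.IsSymm) (hpd : Ψ.PosDef)
    (hsparse : ∀ a b : Fin n, (blk a : ℕ) ≤ N → (blk b : ℕ) ≤ N →
      ((blk a : ℕ) + 2 ≤ (blk b : ℕ) ∨ (blk b : ℕ) + 2 ≤ (blk a : ℕ)) → Ψ a b = 0) :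
    ∃ L : Matrix (Fin n) (Fin n) ℝ,
      (∀ a b : Fin n, a < b → L a b = 0) ∧
      (∀ a : Fin n, 0 < L a a) ∧
      L * L.transpose = Ψ ∧
      (∀ a b : Fin n, L a b ≠ 0 →
        (blk a : ℕ) = (blk b : ℕ) ∨ (blk a : ℕ) = (blk b : ℕ) + 1 ∨ (blk a : ℕ) = N + 1) := by
  haveI i1 : WellFoundedLT (Fin n) := inferInstance
  set d : Fin n → ℝ := LDL.diagEntries hpd with hddef
  have hdiagdet : (LDL.diag hpd).det = ∏ i, d i := by
    rw [LDL.diag]; convert Matrix.det_diagonal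
  have h2 : LDL.diag hpd = LDL.lowerInv hpd * Ψ * (LDL.lowerInv hpd)ᵀ := by
    have h := LDL.diag_eq_lowerInv_conj hpd
    rwa [Matrix.conjTranspose_eq_transpose_of_trivial] at h
  have hu : IsUnit (LDL.lowerInv hpd).det := by
    haveI I := @LDL.invertibleLowerInv ℝ _ (Fin n) _ i1 inferInstance Ψ _ hpd
    have h := @Matrix.isUnit_det_of_invertible (Fin n) ℝ _
      (fun a b => instDecidableEqFin n a b) _ (LDL.lowerInv hpd) I
    convert h using 2
  have hdiageq : LDL.diag hpd = Matrix.diagonal (d := d) := by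
    ext i j
    rw [LDL.diag]
  set L₀ : Matrix (Fin n) (Fin n) ℝ := (LDL.lowerInv hpd)⁻¹ with hL₀def
  -- the factorization from the LDL decomposition
  have hinv1 : L₀ * LDL.lowerInv hpd = 1 := Matrix.nonsing_inv_mul _ hu
  have hinv2 : (LDL.lowerInv hpd)ᵀ * L₀ᵀ = 1 := by
    rw [hL₀def, ← Matrix.transpose_mul, Matrix.nonsing_inv_mul _ hu, Matrix.transpose_one]
  have hfact0 : L₀ * LDL.diag hpd * L₀.transpose = Ψ := by
    rw [h2]
    have hassoc : L₀ * (LDL.lowerInv hpd * Ψ * (LDL.lowerInv hpd)ᵀ) * L₀ᵀ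
        = (L₀ * LDL.lowerInv hpd) * (Ψ * ((LDL.lowerInv hpd)ᵀ * L₀ᵀ)) := by
      simp only [Matrix.mul_assoc]
    rw [hassoc, hinv1, hinv2, Matrix.one_mul, Matrix.mul_one]
  -- determinant identity
  have hΨdet : Ψ.det ≠ 0 := ne_of_gt hpd.det_pos
  have hprod : L₀.det * (∏ i, d i) * L₀.det = Ψ.det := by
    rw [← hfact0, Matrix.det_mul, Matrix.det_mul, Matrix.det_transpose, hdiagdet]
  have hdetL₀ : L₀.det ≠ 0 := by
    intro h; apply hΨdet; rw [← hprod, h, zero_mul, zero_mul]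
  have hproddet : (∏ i, d i) ≠ 0 := by
    intro h; apply hΨdet; rw [← hprod, h, mul_zero, zero_mul]
  -- the diagonal entries of D are nonnegative, hence positive
  have hdnn : ∀ i, 0 ≤ d i := by
    intro i
    have h := hpd.posSemidef.dotProduct_mulVec_nonneg (star (LDL.lowerInv hpd i))
    simp only [hddef, LDL.diagEntries, EuclideanSpace.inner_toLp_toLp]
    simpa [dotProduct_comm] using h
  have hdpos : ∀ i, 0 < d i := by
    intro i
    rcases (hdnn i).lt_or_eq with h | h
    · exact h
    · exact absurd (Finset.prod_eq_zero (Finset.mem_univ i) h.symm) hproddet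
  -- L₀ is lower triangular
  haveI : Invertible (LDL.lowerInv hpd) := (LDL.lowerInv hpd).invertibleOfIsUnitDet hu
  have hlowtri : (LDL.lowerInv hpd).BlockTriangular OrderDual.toDual := by
    intro i j hij
    exact LDL.lowerInv_triangular hpd hij
  have hL₀tri : ∀ a b : Fin n, a < b → L₀ a b = 0 := by
    have h := Matrix.blockTriangular_inv_of_blockTriangular (M := LDL.lowerInv hpd)
      (b := OrderDual.toDual) hlowtri
    intro a b hab
    exact h hab
  -- the diagonal entries of L₀ are nonzero
  have hL₀diag : ∀ i, L₀ i i ≠ 0 := by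
    have hdet2 : L₀.det = ∏ i, L₀ i i :=
      Matrix.det_of_lowerTriangular L₀ (fun i j hij => hL₀tri i j hij)
    intro i hi
    exact hdetL₀ (hdet2.trans (Finset.prod_eq_zero (Finset.mem_univ i) hi))
  -- the scaling coefficients
  set c : Fin n → ℝ := fun i => if 0 < L₀ i i then Real.sqrt (d i) else -Real.sqrt (d i)
    with hcdef
  have hc2 : ∀ i, c i * c i = d i := by
    intro i
    have h := Real.mul_self_sqrt (hdpos i).le
    by_cases hcase : 0 < L₀ i i <;> simp [hcdef, hcase, h]
  set L : Matrix (Fin n) (Fin n) ℝ := L₀ * Matrix.diagonal c with hLdef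
  have hLapp : ∀ a b : Fin n, L a b = L₀ a b * c b := by
    intro a b; rw [hLdef, Matrix.mul_diagonal]
  -- L is lower triangular
  have hLtri : ∀ a b : Fin n, a < b → L a b = 0 := by
    intro a b hab; rw [hLapp, hL₀tri a b hab, zero_mul]
  -- L has positive diagonal
  have hLdiag : ∀ a : Fin n, 0 < L a a := by
    intro a
    rw [hLapp]
    rcases lt_trichotomy (L₀ a a) 0 with h | h | h
    · have hca : c a = -Real.sqrt (d a) := by simp [hcdef, not_lt.mpr h.le]
      rw [hca]
      have := Real.sqrt_pos.mpr (hdpos a)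
      nlinarith
    · exact absurd h (hL₀diag a)
    · have hca : c a = Real.sqrt (d a) := by simp [hcdef, h]
      rw [hca]
      exact mul_pos h (Real.sqrt_pos.mpr (hdpos a))
  -- the factorization
  have hfact : L * L.transpose = Ψ := by
    calc L * L.transpose
        = L₀ * Matrix.diagonal c * ((Matrix.diagonal c).transpose * L₀.transpose) := by
          rw [hLdef, Matrix.transpose_mul]
      _ = L₀ * (Matrix.diagonal c * Matrix.diagonal c) * L₀.transpose := by
          rw [Matrix.diagonal_transpose, Matrix.mul_assoc, Matrix.mul_assoc, Matrix.mul_assoc]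
      _ = L₀ * LDL.diag hpd * L₀.transpose := by
          rw [Matrix.diagonal_mul_diagonal, hdiageq,
            show (fun i => c i * c i) = d from funext hc2]
      _ = Ψ := hfact0
  -- key sparsity lemma: if row a of Ψ vanishes on all columns ≤ j, then L a j = 0
  have key : ∀ (m : ℕ) (a j : Fin n), (j : ℕ) = m →
      (∀ k : Fin n, k ≤ j → Ψ a k = 0) → L a j = 0 := by
    intro m
    induction m using Nat.strong_induction_on with
    | _ m ih =>
      intro a j hj hzero
      have hΨaj : Ψ a j = 0 := hzero j le_rfl
      have hsum : (L * L.transpose) a j = Ψ a j := by rw [hfact]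
      rw [Matrix.mul_apply] at hsum
      have hsingle : ∑ k, L a k * L.transpose k j = L a j * L j j := by
        apply Finset.sum_eq_single
        · intro k _ hkj
          rcases lt_or_gt_of_ne hkj with hk | hk
          · have hkm : (k : ℕ) < m := by rw [← hj]; exact hk
            have hLak : L a k = 0 :=
              ih _ hkm a k rfl (fun k' hk' => hzero k' (le_trans hk' hk.le))
            rw [hLak, zero_mul]
          · have hT : L.transpose k j = 0 := hLtri j k hk
            rw [hT, mul_zero]
        · intro h; exact absurd (Finset.mem_univ j) h
      rw [hsingle, hΨaj] at hsum
      exact (mul_eq_zero.mp hsum).resolve_right (ne_of_gt (hLdiag j))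
  refine ⟨L, hLtri, hLdiag, hfact, ?_⟩
  intro a b hLab
  by_contra hcon
  push_neg at hcon
  obtain ⟨h1, h2', h3⟩ := hcon
  have hba : b ≤ a := by
    by_contra h
    exact hLab (hLtri a b (lt_of_not_ge h))
  have hblkba : (blk b : ℕ) ≤ (blk a : ℕ) := hblk hba
  have haN : (blk a : ℕ) ≤ N := by
    have := (blk a).isLt
    omega
  have hgap : (blk b : ℕ) + 2 ≤ (blk a : ℕ) := by omega
  apply hLab
  apply key (b : ℕ) a b rfl
  intro k hk
  have hkb : (blk k : ℕ) ≤ (blk b : ℕ) := hblk hk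
  exact hsparse a k haN (by omega) (Or.inr (by omega))
end

section
/- Let Ψ be a symmetric positive definite block-tri-diagonal-arrow matrix with blocks Ψ_{i,j}, 0 ≤ i,j ≤ N+1. Define L₀,₀ = chol(Ψ₀,₀), L_{N+1,0} = Ψ_{N+1,0} L₀,₀^{-T}, and for i = 1,…,N: L_{i,i-1} = Ψ_{i,i-1} L_{i-1,i-1}^{-T}, L_{i,i} = chol(Ψ_{i,i} − L_{i,i-1} L_{i,i-1}ᵀ), L_{N+1,i} = (Ψ_{N+1,i} − L_{N+1,i-1} L_{i,i-1}ᵀ) L_{i,i}^{-T}, and finally L_{N+1,N+1} = chol(Ψ_{N+1,N+1} − Σ_{i=0}^N L_{N+1,i} L_{N+1,i}ᵀ). Then all Cholesky factorizations in the recursion are well-defined (their arguments are positive definite) and the resulting block lower-triangular matrix L satisfies LLᵀ = Ψ. -/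
open Matrix

namespace CholAux

lemma isUnit_det_of_lowerTri {k : ℕ} {T : Matrix (Fin k) (Fin k) ℝ}
    (h1 : ∀ a b : Fin k, a < b → T a b = 0) (h2 : ∀ a, 0 < T a a) :
    IsUnit T.det := by
  have hbt : T.BlockTriangular OrderDual.toDual := fun i j h => h1 i j h
  rw [Matrix.det_of_lowerTriangular T hbt]
  exact (Finset.prod_pos fun i _ => h2 i).ne'.isUnit

lemma posDef_mul_transpose {k : ℕ} {B : Matrix (Fin k) (Fin k) ℝ} (hB : IsUnit B.det) :
    (B * Bᵀ).PosDef := by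
  have hsd : (B * Bᵀ).PosSemidef := by
    have := Matrix.posSemidef_self_mul_conjTranspose B
    rwa [Matrix.conjTranspose_eq_transpose_of_trivial] at this
  refine Matrix.posDef_iff_dotProduct_mulVec.2 ⟨hsd.1, fun x hx => ?_⟩
  rcases lt_or_eq_of_le (hsd.dotProduct_mulVec_nonneg x) with h | h
  · exact h
  exfalso
  have hxv : Bᵀ *ᵥ x ≠ 0 := by
    have hinj : Function.Injective (Bᵀ).mulVec := by
      have hu : IsUnit (Bᵀ).det := by simpa using hB
      exact Matrix.mulVec_injective_iff_isUnit.2 (Matrix.isUnit_iff_isUnit_det _ |>.2 hu)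
    intro h0
    exact hx (hinj (by simpa using h0))
  have heq : dotProduct (star x) ((B * Bᵀ) *ᵥ x) = dotProduct (Bᵀ *ᵥ x) (Bᵀ *ᵥ x) := by
    rw [← Matrix.mulVec_mulVec, Matrix.dotProduct_mulVec]
    congr 1
    rw [show star x = x from by simp]
    conv_lhs => rw [← Matrix.transpose_transpose B]
    rw [Matrix.vecMul_transpose]
  rw [← h] at heq
  have hdp : dotProduct (Bᵀ *ᵥ x) (Bᵀ *ᵥ x) = 0 := heq.symm
  exact hxv (by
    funext i
    have hnn : ∀ j, 0 ≤ (Bᵀ *ᵥ x) j * (Bᵀ *ᵥ x) j := fun j => mul_self_nonneg _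
    have := (Finset.sum_eq_zero_iff_of_nonneg (fun j _ => hnn j)).mp hdp i (Finset.mem_univ i)
    simpa [mul_self_eq_zero] using this)

lemma eq_mul_inv_of_eq {k m : ℕ} {B : Matrix (Fin k) (Fin k) ℝ} (hB : IsUnit B.det)
    {A C : Matrix (Fin m) (Fin k) ℝ} (h : C = A * Bᵀ) :
    A = C * Bᵀ⁻¹ := by
  have hB' : IsUnit Bᵀ.det := by rwa [Matrix.det_transpose]
  rw [h]
  exact (Matrix.mul_nonsing_inv_cancel_right Bᵀ A hB').symm

lemma eq_zero_of_mul_transpose_eq_zero {k m : ℕ} {B : Matrix (Fin k) (Fin k) ℝ}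
    (hB : IsUnit B.det) {A : Matrix (Fin m) (Fin k) ℝ} (h : A * Bᵀ = 0) : A = 0 := by
  have := eq_mul_inv_of_eq hB h.symm
  rwa [Matrix.zero_mul] at this

lemma chol_gen {ι : Type*} [Fintype ι] [LinearOrder ι] [WellFoundedLT ι]
    [LocallyFiniteOrderBot ι] {M : Matrix ι ι ℝ} (hM : M.PosDef) :
    ∃ L : Matrix ι ι ℝ,
      (∀ a b : ι, a < b → L a b = 0) ∧ (∀ a, 0 < L a a) ∧ L * Lᵀ = M := by
  haveI : Invertible (LDL.lowerInv hM) := LDL.invertibleLowerInv hM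
  have hrow : ∀ i, LDL.lowerInv hM i ≠ 0 := by
    intro i h0
    have h1 := congrFun (congrFun (mul_invOf_self (LDL.lowerInv hM)) i) i
    rw [Matrix.mul_apply] at h1
    simp only [Matrix.one_apply_eq] at h1
    have : ∀ j, LDL.lowerInv hM i j = 0 := fun j => congrFun h0 j
    simp [this] at h1
  have hdpos : ∀ i, 0 < LDL.diagEntries hM i := by
    intro i
    have hv : (LDL.lowerInv hM i : ι → ℝ) ≠ 0 := hrow i
    have h2 := hM.dotProduct_mulVec_pos hv
    unfold LDL.diagEntries
    simpa [PiLp.inner_apply, RCLike.inner_apply, dotProduct, star, mul_comm] using h2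
  set v : ι → ℝ := fun i => Real.sqrt (LDL.diagEntries hM i) with hv
  have hvpos : ∀ i, 0 < v i := fun i => Real.sqrt_pos.2 (hdpos i)
  haveI : Invertible (LDL.lower hM) := by
    rw [LDL.lower, ← Matrix.invOf_eq_nonsing_inv]; infer_instance
  haveI : Invertible (Matrix.diagonal v) :=
    Matrix.invertibleOfIsUnitDet _ (by
      rw [Matrix.det_diagonal]
      exact (Finset.prod_pos fun i _ => hvpos i).ne'.isUnit)
  set A : Matrix ι ι ℝ := LDL.lower hM * Matrix.diagonal v with hA
  have hlowtri : (LDL.lowerInv hM).BlockTriangular OrderDual.toDual :=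
    fun i j h => LDL.lowerInv_triangular hM h
  have hlow : (LDL.lower hM).BlockTriangular OrderDual.toDual := by
    rw [LDL.lower]; exact Matrix.blockTriangular_inv_of_blockTriangular hlowtri
  have hAtri : A.BlockTriangular OrderDual.toDual :=
    hlow.mul (Matrix.blockTriangular_diagonal v)
  have hAAT : A * Aᵀ = M := by
    have h1 : Matrix.diagonal v * (Matrix.diagonal v)ᵀ = LDL.diag hM := by
      rw [Matrix.diagonal_transpose, Matrix.diagonal_mul_diagonal]
      unfold LDL.diag
      have hfe : (fun i => v i * v i) = LDL.diagEntries hM :=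
        funext fun i => Real.mul_self_sqrt (hdpos i).le
      rw [hfe]
    have h2 : (LDL.lower hM)ᴴ = (LDL.lower hM)ᵀ :=
      Matrix.conjTranspose_eq_transpose_of_trivial _
    calc A * Aᵀ
        = LDL.lower hM * (Matrix.diagonal v * (Matrix.diagonal v)ᵀ) * (LDL.lower hM)ᵀ := by
          rw [hA, Matrix.transpose_mul]
          simp only [Matrix.mul_assoc]
      _ = M := by rw [h1, ← h2, LDL.lower_conj_diag hM]
  haveI : Invertible A := by rw [hA]; exact invertibleMul _ _
  have hdetA : IsUnit A.det := Matrix.isUnit_det_of_invertible A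
  have hAdiag : ∀ i, A i i ≠ 0 := by
    rw [Matrix.det_of_lowerTriangular A hAtri] at hdetA
    intro i
    exact Finset.prod_ne_zero_iff.mp hdetA.ne_zero i (Finset.mem_univ i)
  set ε : ι → ℝ := fun i => if A i i < 0 then -1 else 1 with hε
  have hε2 : ∀ i, ε i * ε i = 1 := by
    intro i; by_cases h : A i i < 0 <;> simp [hε, h]
  refine ⟨A * Matrix.diagonal ε, fun a b hab => ?_, fun a => ?_, ?_⟩
  · rw [Matrix.mul_diagonal]
    have : A a b = 0 := hAtri (by exact hab : (OrderDual.toDual b) < OrderDual.toDual a)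
    rw [this, zero_mul]
  · rw [Matrix.mul_diagonal]
    rcases lt_trichotomy (A a a) 0 with h | h | h
    · simp only [hε, h, if_pos]
      linarith
    · exact absurd h (hAdiag a)
    · simp only [hε, h.not_gt, if_neg, not_false_iff, mul_one]
      exact h
  · have hde : Matrix.diagonal ε * (Matrix.diagonal ε)ᵀ = 1 := by
      rw [Matrix.diagonal_transpose, Matrix.diagonal_mul_diagonal]
      have : (fun i => ε i * ε i) = fun _ => (1 : ℝ) := funext fun i => hε2 i
      rw [this, Matrix.diagonal_one]
    calc A * Matrix.diagonal ε * (A * Matrix.diagonal ε)ᵀ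
        = A * (Matrix.diagonal ε * (Matrix.diagonal ε)ᵀ) * Aᵀ := by
          rw [Matrix.transpose_mul]
          simp only [Matrix.mul_assoc]
      _ = M := by rw [hde, Matrix.mul_one, hAAT]

lemma posDef_submatrix_equiv {m' n' : Type*} [Fintype m'] [Fintype n']
    {M : Matrix n' n' ℝ} (hM : M.PosDef) (e : m' ≃ n') : (M.submatrix e e).PosDef := by
  refine Matrix.posDef_iff_dotProduct_mulVec.2 ⟨hM.1.submatrix e, fun x hx => ?_⟩
  have hx' : x ∘ e.symm ≠ 0 := by
    intro h0
    apply hx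
    funext a
    have := congrFun h0 (e a)
    simpa using this
  have h2 := hM.dotProduct_mulVec_pos hx'
  have heq : dotProduct (star x) ((M.submatrix e e) *ᵥ x)
      = dotProduct (star (x ∘ e.symm)) (M *ᵥ (x ∘ e.symm)) := by
    rw [Matrix.submatrix_mulVec_equiv]
    rw [dotProduct, dotProduct]
    refine (Fintype.sum_equiv e.symm _ _ fun b => ?_).symm
    simp [Function.comp]
  rw [heq]
  exact h2

lemma chol_lin {ι : Type*} [Fintype ι] [LinearOrder ι] {M : Matrix ι ι ℝ} (hM : M.PosDef) :
    ∃ L : Matrix ι ι ℝ,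
      (∀ a b : ι, a < b → L a b = 0) ∧ (∀ a, 0 < L a a) ∧ L * Lᵀ = M := by
  set n := Fintype.card ι with hn
  let e : ι ≃o Fin n := (monoEquivOfFin ι rfl).symm
  have hpd' : (M.submatrix e.symm.toEquiv e.symm.toEquiv).PosDef :=
    posDef_submatrix_equiv hM e.symm.toEquiv
  haveI i1 : WellFoundedLT (Fin n) := inferInstance
  haveI i2 : LocallyFiniteOrderBot (Fin n) := inferInstance
  obtain ⟨L0, h1, h2, h3⟩ := @chol_gen (Fin n) _ _ i1 i2 _ hpd'
  refine ⟨L0.submatrix e.toEquiv e.toEquiv, fun a b hab => ?_, fun a => ?_, ?_⟩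
  · exact h1 _ _ (by simpa using hab)
  · exact h2 _
  · rw [Matrix.transpose_submatrix, Matrix.submatrix_mul_equiv, h3,
      Matrix.submatrix_submatrix]
    have h4 : (e.symm.toEquiv : Fin n → ι) ∘ (e.toEquiv : ι → Fin n) = id := by
      funext a; simp
    rw [h4, Matrix.submatrix_id_id]

end CholAux

open Matrix

/-- Assemble a family of blocks `B i j : Matrix (Fin (d i)) (Fin (d j)) ℝ`,
`0 ≤ i, j ≤ N+1`, into one big square matrix indexed by the sigma type. -/
def assembleBlocks (d : ℕ → ℕ) (N : ℕ)
    (B : ∀ i j : ℕ, Matrix (Fin (d i)) (Fin (d j)) ℝ) :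
    Matrix ((i : Fin (N + 2)) × Fin (d i)) ((i : Fin (N + 2)) × Fin (d i)) ℝ :=
  Matrix.of fun p q => B p.1 q.1 p.2 q.2

/-- `L` is the (unique) lower-triangular Cholesky factor with positive diagonal of `M`. -/
def IsCholOf {k : ℕ} (L M : Matrix (Fin k) (Fin k) ℝ) : Prop :=
  (∀ a b : Fin k, a < b → L a b = 0) ∧ (∀ a : Fin k, 0 < L a a) ∧ L * L.transpose = M

/-- The block-tri-diagonal-arrow Cholesky recursion (Algorithm 3) is
well-defined (all Cholesky arguments are positive definite) and the assembled block
lower-triangular factor `L` satisfies `LLᵀ = Ψ`. -/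
theorem block_tridiag_arrow_cholesky_recursion
    (d : ℕ → ℕ) (N : ℕ)
    (Ψ : ∀ i j : ℕ, Matrix (Fin (d i)) (Fin (d j)) ℝ)
    (hsymm : (assembleBlocks d N Ψ).IsSymm)
    (hpd : (assembleBlocks d N Ψ).PosDef)
    (hsparse : ∀ i j : ℕ, i ≤ N → j ≤ N → (i + 2 ≤ j ∨ j + 2 ≤ i) → Ψ i j = 0) :
    ∃ L : ∀ i j : ℕ, Matrix (Fin (d i)) (Fin (d j)) ℝ,
      -- Algorithm 3, lines 1-2
      (Ψ 0 0).PosDef ∧ IsCholOf (L 0 0) (Ψ 0 0) ∧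
      L (N + 1) 0 = Ψ (N + 1) 0 * ((L 0 0).transpose)⁻¹ ∧
      -- Algorithm 3, lines 3-7
      (∀ i : ℕ, 1 ≤ i → i ≤ N →
        L i (i - 1) = Ψ i (i - 1) * ((L (i - 1) (i - 1)).transpose)⁻¹ ∧
        (Ψ i i - L i (i - 1) * (L i (i - 1)).transpose).PosDef ∧
        IsCholOf (L i i) (Ψ i i - L i (i - 1) * (L i (i - 1)).transpose) ∧
        L (N + 1) i
          = (Ψ (N + 1) i - L (N + 1) (i - 1) * (L i (i - 1)).transpose)
            * ((L i i).transpose)⁻¹) ∧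
      -- Algorithm 3, line 8
      (Ψ (N + 1) (N + 1)
        - ∑ i ∈ Finset.range (N + 1), L (N + 1) i * (L (N + 1) i).transpose).PosDef ∧
      IsCholOf (L (N + 1) (N + 1))
        (Ψ (N + 1) (N + 1)
          - ∑ i ∈ Finset.range (N + 1), L (N + 1) i * (L (N + 1) i).transpose) ∧
      -- all blocks outside the block-tri-diagonal-arrow lower pattern vanish
      (∀ i j : ℕ, i ≤ N + 1 → j ≤ N + 1 →
        ¬(i = j ∨ i = j + 1 ∨ i = N + 1) → L i j = 0) ∧
      -- the assembled factor satisfies L Lᵀ = Ψ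
      assembleBlocks d N L * (assembleBlocks d N L).transpose = assembleBlocks d N Ψ := by
  letI : LinearOrder ((i : Fin (N + 2)) × Fin (d i)) := Sigma.Lex.linearOrder
  obtain ⟨bigL, h1, h2, h3⟩ := CholAux.chol_lin hpd
  let Lb : ∀ i j : ℕ, Matrix (Fin (d i)) (Fin (d j)) ℝ := fun i j =>
    if h : i < N + 2 ∧ j < N + 2 then
      Matrix.of (fun a b => bigL ⟨⟨i, h.1⟩, a⟩ ⟨⟨j, h.2⟩, b⟩) else 0
  have hLb : ∀ (i j : ℕ) (hi : i < N + 2) (hj : j < N + 2) (a : Fin (d i)) (b : Fin (d j)),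
      Lb i j a b = bigL ⟨⟨i, hi⟩, a⟩ ⟨⟨j, hj⟩, b⟩ := by
    intro i j hi hj a b
    show (if h : i < N + 2 ∧ j < N + 2 then
      Matrix.of (fun a b => bigL ⟨⟨i, h.1⟩, a⟩ ⟨⟨j, h.2⟩, b⟩) else 0) a b = _
    rw [dif_pos ⟨hi, hj⟩]
    rfl
  -- upper blocks vanish
  have hub : ∀ (i j : ℕ), i < N + 2 → j < N + 2 → i < j → Lb i j = 0 := by
    intro i j hi hj hij
    ext a b
    rw [hLb i j hi hj a b]
    rw [h1 ⟨⟨i, hi⟩, a⟩ ⟨⟨j, hj⟩, b⟩ (Sigma.Lex.left (α := fun i : Fin (N + 2) => Fin (d i))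
        (r := (· < ·)) (s := fun _ => (· < ·)) a b
        (show (⟨i, hi⟩ : Fin (N + 2)) < ⟨j, hj⟩ from hij))]
    rfl
  -- diagonal blocks are lower triangular with positive diagonal
  have htri : ∀ (i : ℕ) (hi : i < N + 2) (a b : Fin (d i)), a < b → Lb i i a b = 0 := by
    intro i hi a b hab
    rw [hLb i i hi hi a b]
    exact h1 _ _ (Sigma.Lex.right (α := fun i : Fin (N + 2) => Fin (d i))
      (r := (· < ·)) (s := fun _ => (· < ·)) (i := ⟨i, hi⟩) a b hab)
  have hdg : ∀ (i : ℕ) (hi : i < N + 2) (a : Fin (d i)), 0 < Lb i i a a := by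
    intro i hi a
    rw [hLb i i hi hi a a]
    exact h2 _
  have hdet : ∀ (i : ℕ) (hi : i < N + 2), IsUnit (Lb i i).det := fun i hi =>
    CholAux.isUnit_det_of_lowerTri (htri i hi) (hdg i hi)
  -- the block-level product identity
  have hblock : ∀ (i j : ℕ), i < N + 2 → j < N + 2 →
      Ψ i j = ∑ k ∈ Finset.range (N + 2), Lb i k * (Lb j k)ᵀ := by
    intro i j hi hj
    rw [← Fin.sum_univ_eq_sum_range (fun k => Lb i k * (Lb j k)ᵀ) (N + 2)]
    ext a b
    rw [Matrix.sum_apply]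
    have hmm : assembleBlocks d N Ψ ⟨⟨i, hi⟩, a⟩ ⟨⟨j, hj⟩, b⟩
        = ∑ r : (i : Fin (N + 2)) × Fin (d i),
            bigL ⟨⟨i, hi⟩, a⟩ r * bigL ⟨⟨j, hj⟩, b⟩ r := by
      rw [← h3, Matrix.mul_apply]
      simp only [Matrix.transpose_apply]
    rw [show Ψ i j a b = assembleBlocks d N Ψ ⟨⟨i, hi⟩, a⟩ ⟨⟨j, hj⟩, b⟩ from rfl, hmm,
      ← Finset.univ_sigma_univ, Finset.sum_sigma]
    refine Finset.sum_congr rfl fun k _ => ?_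
    rw [Matrix.mul_apply]
    refine Finset.sum_congr rfl fun c _ => ?_
    rw [Matrix.transpose_apply, hLb i (↑k) hi k.isLt a c, hLb j (↑k) hj k.isLt b c]
  -- band structure
  have hband : ∀ (j i : ℕ), i ≤ N → j + 2 ≤ i → Lb i j = 0 := by
    intro j
    induction j using Nat.strong_induction_on with
    | _ j IH =>
      intro i hiN hji
      have hi : i < N + 2 := by omega
      have hj : j < N + 2 := by omega
      have hs := hblock i j hi hj
      have hside : ∀ k ∈ Finset.range (N + 2), k ≠ j → Lb i k * (Lb j k)ᵀ = 0 := by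
        intro k hk hkj
        rcases lt_or_gt_of_ne hkj with hlt | hgt
        · rw [IH k hlt i hiN (by omega), Matrix.zero_mul]
        · rw [hub j k hj (Finset.mem_range.1 hk) hgt]
          simp
      rw [Finset.sum_eq_single_of_mem j (Finset.mem_range.2 hj) hside] at hs
      exact CholAux.eq_zero_of_mul_transpose_eq_zero (hdet j hj)
        (hs.symm.trans (hsparse i j hiN (by omega) (Or.inr hji)))
  -- column-0 identity
  have hcol0 : ∀ r : ℕ, r < N + 2 → Ψ r 0 = Lb r 0 * (Lb 0 0)ᵀ := by
    intro r hr
    have hs := hblock r 0 hr (by omega)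
    rw [Finset.sum_eq_single_of_mem 0 (Finset.mem_range.2 (by omega)) ?_] at hs
    · exact hs
    · intro k hk hk0
      rw [hub 0 k (by omega) (Finset.mem_range.1 hk) (by omega)]
      simp
  -- subdiagonal identity
  have hone : ∀ j : ℕ, j + 1 ≤ N → Ψ (j + 1) j = Lb (j + 1) j * (Lb j j)ᵀ := by
    intro j hjN
    have hs := hblock (j + 1) j (by omega) (by omega)
    rw [Finset.sum_eq_single_of_mem j (Finset.mem_range.2 (by omega)) ?_] at hs
    · exact hs
    · intro k hk hkj
      rcases lt_or_gt_of_ne hkj with hlt | hgt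
      · rw [hband k (j + 1) hjN (by omega), Matrix.zero_mul]
      · rw [hub j k (by omega) (Finset.mem_range.1 hk) hgt]
        simp
  -- two-term identity for column j+1 (any row r)
  have htwo : ∀ (r j : ℕ), r < N + 2 → j + 1 ≤ N →
      Ψ r (j + 1) = Lb r j * (Lb (j + 1) j)ᵀ
        + Lb r (j + 1) * (Lb (j + 1) (j + 1))ᵀ := by
    intro r j hr hjN
    have hs := hblock r (j + 1) hr (by omega)
    have hsub : Finset.range (j + 2) ⊆ Finset.range (N + 2) := Finset.range_subset_range.2 (by omega)
    have hz : ∀ k ∈ Finset.range (N + 2), k ∉ Finset.range (j + 2) →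
        Lb r k * (Lb (j + 1) k)ᵀ = 0 := by
      intro k hk hk2
      rw [hub (j + 1) k (by omega) (Finset.mem_range.1 hk)
        (by simp only [Finset.mem_range] at hk2; omega)]
      simp
    rw [← Finset.sum_subset hsub hz, Finset.sum_range_succ, Finset.sum_range_succ] at hs
    have hz0 : ∑ k ∈ Finset.range j, Lb r k * (Lb (j + 1) k)ᵀ = 0 :=
      Finset.sum_eq_zero fun k hk => by
        rw [hband k (j + 1) hjN (by have := Finset.mem_range.1 hk; omega)]
        simp
    rw [hz0, zero_add] at hs
    exact hs
  -- diagonal-block Cholesky packaging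
  have hpdchol : ∀ (i : ℕ) (hi : i < N + 2) (M : Matrix (Fin (d i)) (Fin (d i)) ℝ),
      M = Lb i i * (Lb i i)ᵀ → M.PosDef ∧ IsCholOf (Lb i i) M := by
    intro i hi M hM
    subst hM
    exact ⟨CholAux.posDef_mul_transpose (hdet i hi),
      fun a b h => htri i hi a b h, fun a => hdg i hi a, rfl⟩
  have h00 := hcol0 0 (by omega)
  refine ⟨Lb, (hpdchol 0 (by omega) _ h00).1, (hpdchol 0 (by omega) _ h00).2, ?_, ?_, ?_, ?_, ?_, ?_⟩
  · exact CholAux.eq_mul_inv_of_eq (hdet 0 (by omega)) (hcol0 (N + 1) (by omega))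
  · intro i h1i hiN
    obtain ⟨j, rfl⟩ : ∃ j, i = j + 1 := ⟨i - 1, by omega⟩
    have ha := hone j hiN
    have hb := htwo (j + 1) j (by omega) hiN
    have hc := htwo (N + 1) j (by omega) hiN
    refine ⟨CholAux.eq_mul_inv_of_eq (hdet j (by omega)) ha, ?_, ?_, ?_⟩
    · exact (hpdchol (j + 1) (by omega) _ (sub_eq_of_eq_add' hb)).1
    · exact (hpdchol (j + 1) (by omega) _ (sub_eq_of_eq_add' hb)).2
    · exact CholAux.eq_mul_inv_of_eq (hdet (j + 1) (by omega)) (sub_eq_of_eq_add' hc)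
  · have hs := hblock (N + 1) (N + 1) (by omega) (by omega)
    rw [Finset.sum_range_succ] at hs
    exact (hpdchol (N + 1) (by omega) _ (sub_eq_of_eq_add' hs)).1
  · have hs := hblock (N + 1) (N + 1) (by omega) (by omega)
    rw [Finset.sum_range_succ] at hs
    exact (hpdchol (N + 1) (by omega) _ (sub_eq_of_eq_add' hs)).2
  · intro i j hi hj hnot
    have hne : i ≠ j := fun h => hnot (Or.inl h)
    have hne1 : i ≠ j + 1 := fun h => hnot (Or.inr (Or.inl h))
    have hneN : i ≠ N + 1 := fun h => hnot (Or.inr (Or.inr h))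
    rcases Nat.lt_trichotomy i j with h | h | h
    · exact hub i j (by omega) (by omega) h
    · exact absurd h hne
    · exact hband j i (by omega) (by omega)
  · have hassemble : assembleBlocks d N Lb = bigL := by
      ext p q
      obtain ⟨⟨i₀, hi₀⟩, a⟩ := p
      obtain ⟨⟨j₀, hj₀⟩, b⟩ := q
      exact hLb i₀ j₀ hi₀ hj₀ a b
    rw [hassemble, h3]
end

section
/- Under the assumptions that P is symmetric positive semidefinite, ρ, δ > 0, and the diagonal matrices S, Z have strictly positive diagonals, the full 4×4 block KKT matrix [[P + ρI, Aᵀ, Gᵀ, 0], [A, -δI, 0, 0], [G, 0, -δI, I], [0, 0, S, Z]] is nonsingular. -/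
open Matrix

/-- The full 4×4 block KKT matrix
`[[P+ρI, Aᵀ, Gᵀ, 0], [A, -δI, 0, 0], [G, 0, -δI, I], [0, 0, S, Z]]`
is nonsingular when `P` is symmetric positive semidefinite, `ρ, δ > 0`, and the
diagonal matrices `S, Z` have strictly positive diagonals. -/
theorem full_kkt_nonsingular
    {n p m : ℕ} (P : Matrix (Fin n) (Fin n) ℝ) (hPsymm : P.IsSymm) (hP : P.PosSemidef)
    (ρ δ : ℝ) (hρ : 0 < ρ) (hδ : 0 < δ)
    (A : Matrix (Fin p) (Fin n) ℝ) (G : Matrix (Fin m) (Fin n) ℝ)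
    (s z : Fin m → ℝ) (hs : ∀ i, 0 < s i) (hz : ∀ i, 0 < z i)
    (S Z : Matrix (Fin m) (Fin m) ℝ)
    (hS : S = Matrix.diagonal s) (hZ : Z = Matrix.diagonal z)
    (K : Matrix ((Fin n ⊕ Fin p) ⊕ (Fin m ⊕ Fin m)) ((Fin n ⊕ Fin p) ⊕ (Fin m ⊕ Fin m)) ℝ)
    (hK : K = Matrix.fromBlocks
      (Matrix.fromBlocks (P + ρ • (1 : Matrix (Fin n) (Fin n) ℝ)) A.transpose
        A (-(δ • (1 : Matrix (Fin p) (Fin p) ℝ))))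
      (Matrix.fromBlocks G.transpose 0 0 0)
      (Matrix.fromBlocks G 0 0 0)
      (Matrix.fromBlocks (-(δ • (1 : Matrix (Fin m) (Fin m) ℝ)))
        (1 : Matrix (Fin m) (Fin m) ℝ) S Z)) :
    IsUnit K.det := by
  subst hK hS hZ
  rw [isUnit_iff_ne_zero, Ne, ← Matrix.exists_mulVec_eq_zero_iff]
  rintro ⟨x, hx0, hx⟩
  apply hx0
  set u : Fin n → ℝ := fun i => x (Sum.inl (Sum.inl i)) with hu
  set v : Fin p → ℝ := fun i => x (Sum.inl (Sum.inr i)) with hv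
  set w : Fin m → ℝ := fun i => x (Sum.inr (Sum.inl i)) with hw
  set t : Fin m → ℝ := fun i => x (Sum.inr (Sum.inr i)) with ht
  have hxel : x = Sum.elim (Sum.elim u v) (Sum.elim w t) := by
    funext j
    rcases j with (j | j) | (j | j) <;> rfl
  rw [hxel] at hx
  simp only [Matrix.fromBlocks_mulVec] at hx
  -- extract the four equations
  have E1 : (P + ρ • 1) *ᵥ u + Aᵀ *ᵥ v + Gᵀ *ᵥ w = 0 := by
    funext i
    have h := congrFun hx (Sum.inl (Sum.inl i))
    simpa [Matrix.fromBlocks_mulVec] using h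
  have E2 : A *ᵥ u = δ • v := by
    funext i
    have h := congrFun hx (Sum.inl (Sum.inr i))
    simp [Matrix.fromBlocks_mulVec, Matrix.neg_mulVec, Matrix.smul_mulVec, Matrix.one_mulVec] at h
    simp only [Pi.smul_apply, smul_eq_mul]
    linarith
  have E3 : G *ᵥ u = δ • w - t := by
    funext i
    have h := congrFun hx (Sum.inr (Sum.inl i))
    simp [Matrix.fromBlocks_mulVec, Matrix.neg_mulVec, Matrix.smul_mulVec, Matrix.one_mulVec] at h
    simp only [Pi.sub_apply, Pi.smul_apply, smul_eq_mul]
    linarith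
  have E4 : ∀ i, s i * w i + z i * t i = 0 := by
    intro i
    have h := congrFun hx (Sum.inr (Sum.inr i))
    simpa [Matrix.fromBlocks_mulVec, Matrix.mulVec_diagonal] using h
  -- dot the first equation with u
  have key : u ⬝ᵥ (P *ᵥ u) + ρ * (u ⬝ᵥ u) + δ * (v ⬝ᵥ v)
      + (δ * (w ⬝ᵥ w) - t ⬝ᵥ w) = 0 := by
    have h1 : u ⬝ᵥ ((P + ρ • 1) *ᵥ u + Aᵀ *ᵥ v + Gᵀ *ᵥ w) = 0 := by
      rw [E1, dotProduct_zero]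
    rw [dotProduct_add, dotProduct_add, Matrix.add_mulVec, Matrix.smul_mulVec,
      Matrix.one_mulVec, dotProduct_add, dotProduct_smul,
      Matrix.dotProduct_mulVec (A := Aᵀ), Matrix.vecMul_transpose,
      Matrix.dotProduct_mulVec (A := Gᵀ), Matrix.vecMul_transpose, E2, E3] at h1
    rw [smul_dotProduct, sub_dotProduct, smul_dotProduct] at h1
    simp only [smul_eq_mul] at h1
    linarith
  -- express the last bracket as a nonnegative sum
  have htw : δ * (w ⬝ᵥ w) - t ⬝ᵥ w = ∑ i, (δ + s i / z i) * (w i * w i) := by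
    simp only [dotProduct]
    rw [Finset.mul_sum, ← Finset.sum_sub_distrib]
    apply Finset.sum_congr rfl
    intro i _
    have hzi := (hz i).ne'
    have : t i = -(s i / z i) * w i := by
      have := E4 i
      field_simp
      linarith
    rw [this]; ring
  have hQ : 0 ≤ u ⬝ᵥ (P *ᵥ u) := by simpa using hP.dotProduct_mulVec_nonneg u
  have huu : 0 ≤ u ⬝ᵥ u := Finset.sum_nonneg fun i _ => mul_self_nonneg _
  have hvv : 0 ≤ v ⬝ᵥ v := Finset.sum_nonneg fun i _ => mul_self_nonneg _
  have hsum : 0 ≤ ∑ i, (δ + s i / z i) * (w i * w i) := by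
    apply Finset.sum_nonneg
    intro i _
    exact mul_nonneg (add_pos hδ (div_pos (hs i) (hz i))).le (mul_self_nonneg _)
  rw [htw] at key
  have hu0 : u = 0 := by
    rw [← dotProduct_self_eq_zero (v := u)]
    nlinarith [mul_nonneg hρ.le huu, mul_nonneg hδ.le hvv]
  have hv0 : v = 0 := by
    rw [← dotProduct_self_eq_zero (v := v)]
    nlinarith [mul_nonneg hρ.le huu, mul_nonneg hδ.le hvv]
  have hsum0 : ∑ i, (δ + s i / z i) * (w i * w i) = 0 := by
    nlinarith [mul_nonneg hρ.le huu, mul_nonneg hδ.le hvv]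
  have hw0 : w = 0 := by
    funext i
    have h := (Finset.sum_eq_zero_iff_of_nonneg
      (fun i _ => mul_nonneg (add_pos hδ (div_pos (hs i) (hz i))).le
        (mul_self_nonneg (w i)))).mp hsum0 i (Finset.mem_univ i)
    have hpos : 0 < δ + s i / z i := add_pos hδ (div_pos (hs i) (hz i))
    have := mul_eq_zero.mp h
    rcases this with h' | h'
    · exact absurd h' hpos.ne'
    · exact (mul_self_eq_zero).mp h'
  have ht0 : t = 0 := by
    funext i
    have h := E4 i
    rw [hw0] at h
    simp at h
    rcases h with h | h
    · exact absurd h (hz i).ne'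
    · exact h
  rw [hxel, hu0, hv0, hw0, ht0]
  funext j
  rcases j with (j | j) | (j | j) <;> rfl
end
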